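/- With the glued space (Z, d_Z) as above (built from a compact limit (X, d_∞) and monotone sequence d_j ≤ d_∞ with uniform errors ε_j ↓ 0, h_j = ε_j/2), the metric space (Z, d_Z) is compact. -/

import Mathlib

/-- The distance on the sheet `Z_j = X × [0, h_j]` (with `h_j = ε j / 2`). -/
noncomputable def sheetD {X : Type*} [MetricSpace X]
    (d : ℕ → X → X → ℝ) (ε : ℕ → ℝ) (j : ℕ) (z w : X × ℝ) : ℝ :=
  min (dist z.1 w.1 + |z.2 - w.2|)
    ((ε j / 2 - z.2) + (ε j / 2 - w.2) + d j z.1 w.1)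

/-- The glued space `Z`: the common spine `X × {0}` together with the open parts
`X × (0, h_j]` of the sheets. -/
def Glued (X : Type*) (ε : ℕ → ℝ) : Type _ :=
  X ⊕ (Σ j : ℕ, X × {t : ℝ // t ∈ Set.Ioc 0 (ε j / 2)})

/-- The glued distance `d_Z` on `Z`. -/
noncomputable def gluedD {X : Type*} [MetricSpace X]
    (d : ℕ → X → X → ℝ) (ε : ℕ → ℝ) : Glued X ε → Glued X ε → ℝ := fun z w =>
  match z, w with
  | .inl x, .inl y => dist x y
  | .inl x, .inr ⟨k, y, t⟩ => sheetD d ε k (x, 0) (y, (t : ℝ))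
  | .inr ⟨k, y, t⟩, .inl x => sheetD d ε k (y, (t : ℝ)) (x, 0)
  | .inr ⟨j, x, s⟩, .inr ⟨k, y, t⟩ =>
      if j = k then sheetD d ε j (x, (s : ℝ)) (y, (t : ℝ))
      else ⨅ p : X, (sheetD d ε j (x, (s : ℝ)) (p, 0) + sheetD d ε k (p, 0) (y, (t : ℝ)))


/-!
A sequence in `Z` either visits some sheet `X × (0, h_k]` infinitely often, or it leaves every
sheet eventually. In the first case a subsequence converges in the compact closed sheet
`X × [0, h_k]`, and `d_Z` to the limit is the sheet distance, bounded by `d_∞ + |Δt|`. In the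
second case the heights are eventually below any `h_K`, hence tend to `0` because `ε_j → 0`, so
the sequence approaches the spine, where compactness of `X` gives a limit.
-/

open Filter Topology Set

namespace Glued

variable {X : Type*} {ε : ℕ → ℝ}

def proj : Glued X ε → X
  | .inl x => x
  | .inr ⟨_, y, _⟩ => y

def height : Glued X ε → ℝ
  | .inl _ => 0
  | .inr ⟨_, _, t⟩ => t

def sheet (k : ℕ) : Set (Glued X ε) :=
  range fun p : X × {t : ℝ // t ∈ Ioc 0 (ε k / 2)} => .inr ⟨k, p⟩

/-- The closed sheet `X × [0, h_k]` maps into `Z`, its bottom `X × {0}` onto the spine. -/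
noncomputable def ofSheet (k : ℕ) (x : X) (s : ℝ) (hs : s ∈ Icc 0 (ε k / 2)) : Glued X ε :=
  if h : s = 0 then .inl x else .inr ⟨k, x, s, hs.1.lt_of_ne' h, hs.2⟩

theorem height_nonneg : ∀ w : Glued X ε, 0 ≤ w.height
  | .inl _ => le_rfl
  | .inr ⟨_, _, t⟩ => t.2.1.le

theorem exists_mem_sheet_of_height_pos :
    ∀ {w : Glued X ε}, 0 < w.height → ∃ k, w ∈ sheet k ∧ w.height ≤ ε k / 2
  | .inl _, h => (lt_irrefl 0 h).elim
  | .inr ⟨k, y, t⟩, _ => ⟨k, ⟨(y, t), rfl⟩, t.2.2⟩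

theorem tendsto_height_zero (hε0 : Tendsto ε atTop (𝓝 0)) {ι : Type*} {l : Filter ι}
    {u : ι → Glued X ε} (hu : ∀ k, ∀ᶠ i in l, u i ∉ sheet k) :
    Tendsto (height ∘ u) l (𝓝 0) := by
  refine tendsto_order.2 ⟨fun a ha => Eventually.of_forall fun i =>
    ha.trans_le (height_nonneg _), fun δ hδ => ?_⟩
  obtain ⟨K, hK⟩ := eventually_atTop.1 (hε0.eventually (gt_mem_nhds (by linarith : 0 < 2 * δ)))
  filter_upwards [(eventually_all_finset (Finset.range K)).2 fun k _ => hu k] with i hi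
  by_contra! hδi
  obtain ⟨k, hk, hle⟩ := exists_mem_sheet_of_height_pos (hδ.trans_le hδi)
  rcases lt_or_ge k K with hkK | hKk
  · exact hi k (Finset.mem_range.2 hkK) hk
  · have hεk := hK k hKk
    simp only [Function.comp_apply] at hδi
    linarith

end Glued

section

variable {X : Type*} [MetricSpace X] {d : ℕ → X → X → ℝ} {ε : ℕ → ℝ}

theorem sheetD_le (k : ℕ) (z w : X × ℝ) : sheetD d ε k z w ≤ dist z.1 w.1 + |z.2 - w.2| :=
  min_le_left _ _

theorem sheetD_nonneg (hnonneg : ∀ j x y, 0 ≤ d j x y) {k : ℕ} {z w : X × ℝ}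
    (hz : z.2 ≤ ε k / 2) (hw : w.2 ≤ ε k / 2) : 0 ≤ sheetD d ε k z w :=
  le_min (by positivity) (by linarith [hnonneg k z.1 w.1])

theorem tendsto_sheetD_zero (hnonneg : ∀ j x y, 0 ≤ d j x y) {k : ℕ} {ι : Type*} {l : Filter ι}
    {q : ι → X × ℝ} {w : X × ℝ} (hq : Tendsto q l (𝓝 w)) (hqk : ∀ i, (q i).2 ≤ ε k / 2)
    (hw : w.2 ≤ ε k / 2) : Tendsto (fun i => sheetD d ε k (q i) w) l (𝓝 0) := by
  have hbound : Tendsto (fun i => dist (q i).1 w.1 + |(q i).2 - w.2|) l (𝓝 0) := by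
    simpa using (hq.fst_nhds.dist (tendsto_const_nhds (x := w.1))).add (hq.snd_nhds.sub_const w.2).abs
  exact squeeze_zero (fun i => sheetD_nonneg hnonneg (hqk i) hw) (fun i => sheetD_le k _ _) hbound

theorem gluedD_inr_ofSheet (k : ℕ) (p : X × {t : ℝ // t ∈ Ioc 0 (ε k / 2)}) (x : X) (s : ℝ)
    (hs : s ∈ Icc 0 (ε k / 2)) :
    gluedD d ε (.inr ⟨k, p⟩) (Glued.ofSheet k x s hs) = sheetD d ε k (p.1, p.2) (x, s) := by
  by_cases h : s = 0
  · rw [show Glued.ofSheet k x s hs = .inl x from dif_pos h, h]; rfl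
  · rw [show Glued.ofSheet k x s hs = .inr ⟨k, x, s, hs.1.lt_of_ne' h, hs.2⟩ from dif_neg h]
    simp [gluedD]

theorem gluedD_inl_le (w : Glued X ε) (x : X) :
    gluedD d ε w (.inl x) ≤ dist w.proj x + w.height := by
  match w with
  | .inl y => exact (le_add_of_nonneg_right le_rfl)
  | .inr ⟨k, y, t⟩ =>
      show sheetD d ε k (y, t) (x, 0) ≤ dist y x + t
      simpa [abs_of_pos t.2.1] using sheetD_le (d := d) k (y, (t : ℝ)) (x, 0)

theorem gluedD_inl_nonneg (hnonneg : ∀ j x y, 0 ≤ d j x y) (w : Glued X ε) (x : X) :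
    0 ≤ gluedD d ε w (.inl x) := by
  match w with
  | .inl y => exact dist_nonneg
  | .inr ⟨k, y, t⟩ =>
      exact sheetD_nonneg (d := d) hnonneg (z := (y, (t : ℝ))) (w := (x, 0)) t.2.2
        (by simpa using t.2.1.le.trans t.2.2)

theorem tendsto_gluedD_inl (hnonneg : ∀ j x y, 0 ≤ d j x y) {ι : Type*} {l : Filter ι}
    {v : ι → Glued X ε} {x : X} (hproj : Tendsto (Glued.proj ∘ v) l (𝓝 x))
    (hheight : Tendsto (Glued.height ∘ v) l (𝓝 0)) :
    Tendsto (fun i => gluedD d ε (v i) (.inl x)) l (𝓝 0) :=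
  squeeze_zero (fun i => gluedD_inl_nonneg hnonneg _ x) (fun i => gluedD_inl_le _ x)
    (by simpa using (tendsto_iff_dist_tendsto_zero.1 hproj).add hheight)

theorem exists_subseq_tendsto_gluedD_of_sheet [CompactSpace X] (hnonneg : ∀ j x y, 0 ≤ d j x y)
    (k : ℕ) (p : ℕ → X × {t : ℝ // t ∈ Ioc 0 (ε k / 2)}) :
    ∃ φ : ℕ → ℕ, StrictMono φ ∧ ∃ z : Glued X ε,
      Tendsto (fun n => gluedD d ε (.inr ⟨k, p (φ n)⟩) z) atTop (𝓝 0) := by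
  obtain ⟨⟨x, s⟩, hxs, φ, hφ, hconv⟩ :=
    (isCompact_univ.prod isCompact_Icc).tendsto_subseq
      (x := fun n => ((p n).1, ((p n).2 : ℝ))) fun n => ⟨mem_univ _, (p n).2.2.1.le, (p n).2.2.2⟩
  refine ⟨φ, hφ, Glued.ofSheet k x s hxs.2, ?_⟩
  simp only [gluedD_inr_ofSheet]
  exact tendsto_sheetD_zero hnonneg hconv (fun n => (p (φ n)).2.2.2) hxs.2.2

end

theorem gluedD_compact_general
    {X : Type*} [MetricSpace X] [CompactSpace X]
    (d : ℕ → X → X → ℝ) (ε : ℕ → ℝ)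
    (hnonneg : ∀ j x y, 0 ≤ d j x y)
    (hε0 : Filter.Tendsto ε Filter.atTop (nhds 0)) :
    ∀ u : ℕ → Glued X ε, ∃ φ : ℕ → ℕ, StrictMono φ ∧
      ∃ z : Glued X ε, Filter.Tendsto (fun n => gluedD d ε (u (φ n)) z)
        Filter.atTop (nhds 0) := by
  intro u
  by_cases hsheet : ∃ k, ∃ᶠ n in atTop, u n ∈ Glued.sheet k
  · obtain ⟨k, hk⟩ := hsheet
    obtain ⟨ψ, hψ, hψk⟩ := extraction_of_frequently_atTop hk
    choose p hp using hψk
    obtain ⟨φ, hφ, z, hz⟩ := exists_subseq_tendsto_gluedD_of_sheet hnonneg k p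
    refine ⟨ψ ∘ φ, hψ.comp hφ, z, ?_⟩
    simpa only [Function.comp_apply, ← hp] using hz
  · push Not at hsheet
    obtain ⟨x, -, φ, hφ, hx⟩ :=
      isCompact_univ.tendsto_subseq (x := Glued.proj ∘ u) fun _ => mem_univ _
    exact ⟨φ, hφ, .inl x, tendsto_gluedD_inl hnonneg hx
      ((Glued.tendsto_height_zero hε0 hsheet).comp hφ.tendsto_atTop)⟩

/-- The glued space `(Z, d_Z)` built from a compact limit
`(X, d_∞)` and a monotone increasing sequence `d_j ≤ d_∞` with uniform errors
`ε_j ↓ 0` is compact (expressed sequentially for the distance `d_Z`). -/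
theorem gluedD_compact
    {X : Type*} [MetricSpace X] [CompactSpace X] [Nonempty X]
    (d : ℕ → X → X → ℝ) (ε : ℕ → ℝ)
    (hnonneg : ∀ j x y, 0 ≤ d j x y)
    (hself : ∀ j x, d j x x = 0)
    (hdef : ∀ j x y, d j x y = 0 → x = y)
    (hsymm : ∀ j x y, d j x y = d j y x)
    (htri : ∀ j x y z, d j x z ≤ d j x y + d j y z)
    (hmono : ∀ j x y, d j x y ≤ d (j + 1) x y)
    (hle : ∀ j x y, d j x y ≤ dist x y)
    (herr : ∀ j x y, dist x y - d j x y ≤ ε j)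
    (hεpos : ∀ j, 0 < ε j)
    (hεanti : Antitone ε)
    (hε0 : Filter.Tendsto ε Filter.atTop (nhds 0)) :
    ∀ u : ℕ → Glued X ε, ∃ φ : ℕ → ℕ, StrictMono φ ∧
      ∃ z : Glued X ε, Filter.Tendsto (fun n => gluedD d ε (u (φ n)) z)
        Filter.atTop (nhds 0) :=
  gluedD_compact_general d ε hnonneg hε0
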